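/- Let Γ be a symmetric clustering game on a finite simple graph G with c ≥ 2 colors and a positive distribution rule α with maximum disparity ᾱ, and let s be a pure Nash equilibrium of Γ. Then: (a) for every edge {i,j} ∈ E, w_{ij} ≤ (1 + ᾱ)·min{u_i(s), u_j(s)}; and (b) for every player i and every color k ∈ [c], u_i(s) ≥ q_i(k). -/

import Mathlib

open Finset
open scoped Classical

variable {V : Type*}

noncomputable def edgesIn [Fintype V] (G : SimpleGraph V) (S : Finset V) : ℕ :=
  (G.edgeFinset.filter fun e => ∀ v ∈ e, v ∈ S).card

noncomputable def maxDensity [Fintype V] (G : SimpleGraph V) : ℝ :=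
  ⨆ S : {S : Finset V // S.Nonempty}, (edgesIn G S.1 : ℝ) / (S.1.card : ℝ)

noncomputable def maxDisparity (G : SimpleGraph V) (α : V → V → ℝ) : ℝ :=
  ⨆ p : {p : V × V // G.Adj p.1 p.2}, α p.1.1 p.1.2 / α p.1.2 p.1.1

noncomputable def util [Fintype V] (G : SimpleGraph V) (coord : V → V → Prop)
    (α w : V → V → ℝ) {c : ℕ} (q : V → Fin c → ℝ) (s : V → Fin c) (i : V) : ℝ :=
  q i (s i) +
    ∑ j ∈ G.neighborFinset i,
      if (coord i j ∧ s i = s j) ∨ (¬ coord i j ∧ s i ≠ s j)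
      then α i j / (α i j + α j i) * w i j else 0

noncomputable def welfare [Fintype V] (G : SimpleGraph V) (coord : V → V → Prop)
    (α w : V → V → ℝ) {c : ℕ} (q : V → Fin c → ℝ) (s : V → Fin c) : ℝ :=
  ∑ i, util G coord α w q s i

def IsNash [Fintype V] (G : SimpleGraph V) (coord : V → V → Prop)
    (α w : V → V → ℝ) {c : ℕ} (q : V → Fin c → ℝ) (s : V → Fin c) : Prop :=
  ∀ (i : V) (k : Fin c),
    util G coord α w q (Function.update s i k) i ≤ util G coord α w q s i

noncomputable def utilA [Fintype V] (G : SimpleGraph V) (w : V → V → ℝ)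
    {c : ℕ} (s : V → Fin c) (i : V) : ℝ :=
  ∑ j ∈ G.neighborFinset i, if s i = s j then w i j / 2 else 0

noncomputable def welfareA [Fintype V] (G : SimpleGraph V) (w : V → V → ℝ)
    {c : ℕ} (s : V → Fin c) : ℝ :=
  ∑ i, utilA G w s i

def IsNashA [Fintype V] (G : SimpleGraph V) (w : V → V → ℝ)
    {c : ℕ} (St : V → Finset (Fin c)) (s : V → Fin c) : Prop :=
  ∀ i, ∀ k ∈ St i, utilA G w (Function.update s i k) i ≤ utilA G w s i

def IsEpsKEq [Fintype V] (G : SimpleGraph V) (w : V → V → ℝ)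
    {c : ℕ} (St : V → Finset (Fin c)) (ε : ℝ) (k : ℕ) (s : V → Fin c) : Prop :=
  ∀ K : Finset V, K.Nonempty → K.card ≤ k →
    ∀ s' : V → Fin c, (∀ i ∈ K, s' i ∈ St i) → (∀ i ∉ K, s' i = s i) →
      ∃ j ∈ K, utilA G w s' j ≤ ε * utilA G w s j

def IsGWS (G : SimpleGraph V) (α : V → V → ℝ) : Prop :=
  ∃ (σ : V → ℕ) (γ : V → ℝ), Function.Injective σ ∧ (∀ i, 0 ≤ γ i) ∧
    ∀ i j, G.Adj i j →
      (α i j = 0 → σ i < σ j) ∧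
      (0 < α i j → α i j / (α i j + α j i) = γ i / (γ i + γ j))

def BRStep [Fintype V] (G : SimpleGraph V) (coord : V → V → Prop)
    (α w : V → V → ℝ) {c : ℕ} (q : V → Fin c → ℝ) (s s' : V → Fin c) : Prop :=
  ∃ i, (∀ j, j ≠ i → s' j = s j) ∧
    util G coord α w q s i < util G coord α w q s' i ∧
    ∀ k : Fin c, util G coord α w q (Function.update s i k) i ≤ util G coord α w q s' i

/-!
A player can always recolour so as to satisfy any single incident edge `{i, j}`: copy `s j` if
the edge is a coordination edge, pick one of the `c - 1 ≥ 1` other colours otherwise. At an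
equilibrium `u_i(s)` is therefore at least `i`'s share `α_ij / (α_ij + α_ji) · w_ij` of that
edge, and this share is at least `w_ij / (1 + ᾱ)`. Likewise moving to colour `k` already
secures `q_i(k)`, because all edge payoffs are nonnegative.
-/

namespace ClusteringGame

variable {G : SimpleGraph V} {coord : V → V → Prop} {α w : V → V → ℝ} {c : ℕ}
  {q : V → Fin c → ℝ}

-- An `abbrev`, so that its `Decidable` instance is the one `util` uses and `util_eq` is `rfl`.
abbrev Satisfied (coord : V → V → Prop) (t : V → Fin c) (i j : V) : Prop :=
  (coord i j ∧ t i = t j) ∨ (¬ coord i j ∧ t i ≠ t j)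

noncomputable def edgePayoff (coord : V → V → Prop) (α w : V → V → ℝ) (t : V → Fin c)
    (i j : V) : ℝ :=
  if Satisfied coord t i j then α i j / (α i j + α j i) * w i j else 0

lemma util_eq [Fintype V] (t : V → Fin c) (i : V) :
    util G coord α w q t i = q i (t i) + ∑ j ∈ G.neighborFinset i, edgePayoff coord α w t i j :=
  rfl

lemma edgePayoff_nonneg (hα : ∀ i j, G.Adj i j → 0 < α i j) (hw : ∀ i j, 0 ≤ w i j)
    (t : V → Fin c) {i j : V} (hij : G.Adj i j) : 0 ≤ edgePayoff coord α w t i j := by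
  have := hα i j hij
  have := hα j i hij.symm
  have := hw i j
  unfold edgePayoff
  split_ifs <;> positivity

lemma pref_le_util [Fintype V] (hα : ∀ i j, G.Adj i j → 0 < α i j) (hw : ∀ i j, 0 ≤ w i j)
    (t : V → Fin c) (i : V) : q i (t i) ≤ util G coord α w q t i := by
  rw [util_eq]
  refine le_add_of_nonneg_right (Finset.sum_nonneg fun j hj => ?_)
  exact edgePayoff_nonneg hα hw t ((G.mem_neighborFinset i j).1 hj)

lemma share_le_util_of_satisfied [Fintype V] (hα : ∀ i j, G.Adj i j → 0 < α i j)
    (hw : ∀ i j, 0 ≤ w i j) (hq : ∀ i k, 0 ≤ q i k) {t : V → Fin c} {i j : V}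
    (hij : G.Adj i j) (hsat : Satisfied coord t i j) :
    α i j / (α i j + α j i) * w i j ≤ util G coord α w q t i := by
  have hsingle : edgePayoff coord α w t i j ≤
      ∑ j ∈ G.neighborFinset i, edgePayoff coord α w t i j :=
    Finset.single_le_sum (fun j hj => edgePayoff_nonneg hα hw t ((G.mem_neighborFinset i j).1 hj))
      ((G.mem_neighborFinset i j).2 hij)
  rw [edgePayoff, if_pos hsat] at hsingle
  rw [util_eq]
  linarith [hq i (t i)]

lemma exists_satisfied_update (hc : 2 ≤ c) (s : V → Fin c) {i j : V} (hij : i ≠ j) :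
    ∃ k, Satisfied coord (Function.update s i k) i j := by
  simp only [Satisfied, Function.update_self, Function.update_of_ne hij.symm]
  by_cases hco : coord i j
  · exact ⟨s j, Or.inl ⟨hco, rfl⟩⟩
  · obtain ⟨k, hk⟩ :=
      Fintype.exists_ne_of_one_lt_card (by simp only [Fintype.card_fin]; omega) (s j)
    exact ⟨k, Or.inr ⟨hco, hk⟩⟩

lemma div_le_maxDisparity [Finite V] {i j : V} (hij : G.Adj i j) :
    α i j / α j i ≤ maxDisparity G α :=
  le_ciSup (f := fun p : {p : V × V // G.Adj p.1 p.2} => α p.1.1 p.1.2 / α p.1.2 p.1.1)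
    (Set.finite_range _).bddAbove ⟨(i, j), hij⟩

lemma maxDisparity_nonneg [Finite V] (hα : ∀ i j, G.Adj i j → 0 < α i j) {i j : V}
    (hij : G.Adj i j) : 0 ≤ maxDisparity G α :=
  (div_pos (hα i j hij) (hα j i hij.symm)).le.trans (div_le_maxDisparity hij)

lemma le_one_add_mul_share {a b x D : ℝ} (ha : 0 < a) (hb : 0 < b) (hx : 0 ≤ x)
    (hD : b / a ≤ D) : x ≤ (1 + D) * (a / (a + b) * x) := by
  have hshare : 1 ≤ (1 + D) * (a / (a + b)) :=
    calc 1 = (1 + b / a) * (a / (a + b)) := by field_simp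
      _ ≤ (1 + D) * (a / (a + b)) := by gcongr
  nlinarith

end ClusteringGame

open ClusteringGame

namespace IsNash

variable [Fintype V] {G : SimpleGraph V} {coord : V → V → Prop} {α w : V → V → ℝ} {c : ℕ}
  {q : V → Fin c → ℝ} {s : V → Fin c}

lemma share_le_util (hs : IsNash G coord α w q s) (hc : 2 ≤ c)
    (hα : ∀ i j, G.Adj i j → 0 < α i j) (hw : ∀ i j, 0 ≤ w i j) (hq : ∀ i k, 0 ≤ q i k)
    {i j : V} (hij : G.Adj i j) :
    α i j / (α i j + α j i) * w i j ≤ util G coord α w q s i := by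
  obtain ⟨k, hk⟩ := exists_satisfied_update (coord := coord) hc s hij.ne
  exact (share_le_util_of_satisfied hα hw hq hij hk).trans (hs i k)

lemma weight_le_util (hs : IsNash G coord α w q s) (hc : 2 ≤ c)
    (hα : ∀ i j, G.Adj i j → 0 < α i j) (hw : ∀ i j, 0 ≤ w i j) (hq : ∀ i k, 0 ≤ q i k)
    {i j : V} (hij : G.Adj i j) :
    w i j ≤ (1 + maxDisparity G α) * util G coord α w q s i :=
  (le_one_add_mul_share (hα i j hij) (hα j i hij.symm) (hw i j)
    (div_le_maxDisparity hij.symm)).trans <|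
    mul_le_mul_of_nonneg_left (hs.share_le_util hc hα hw hq hij)
      (by linarith [maxDisparity_nonneg hα hij])

lemma pref_le_util (hs : IsNash G coord α w q s) (hα : ∀ i j, G.Adj i j → 0 < α i j)
    (hw : ∀ i j, 0 ≤ w i j) (i : V) (k : Fin c) : q i k ≤ util G coord α w q s i := by
  simpa using (ClusteringGame.pref_le_util (q := q) hα hw (Function.update s i k) i).trans (hs i k)

end IsNash

theorem stmt18_general [Fintype V] (G : SimpleGraph V) (coord : V → V → Prop)
    (c : ℕ) (hc : 2 ≤ c)
    (α w : V → V → ℝ) (q : V → Fin c → ℝ)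
    (hα : ∀ i j, G.Adj i j → 0 < α i j)
    (hw : ∀ i j, 0 ≤ w i j) (hwsymm : ∀ i j, w i j = w j i)
    (hq : ∀ i k, 0 ≤ q i k)
    (s : V → Fin c) (hs : IsNash G coord α w q s) :
    (∀ i j, G.Adj i j →
        w i j ≤ (1 + maxDisparity G α) *
          min (util G coord α w q s i) (util G coord α w q s j)) ∧
    (∀ (i : V) (k : Fin c), q i k ≤ util G coord α w q s i) := by
  refine ⟨fun i j hij => ?_, hs.pref_le_util hα hw⟩
  rw [mul_min_of_nonneg _ _ (by linarith [maxDisparity_nonneg hα hij])]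
  exact le_min (hs.weight_le_util hc hα hw hq hij)
    (hwsymm i j ▸ hs.weight_le_util hc hα hw hq hij.symm)

theorem stmt18 [Fintype V] (G : SimpleGraph V) (coord : V → V → Prop)
    (hcoord : ∀ i j, coord i j ↔ coord j i)
    (c : ℕ) (hc : 2 ≤ c)
    (α w : V → V → ℝ) (q : V → Fin c → ℝ)
    (hα : ∀ i j, G.Adj i j → 0 < α i j)
    (hw : ∀ i j, 0 ≤ w i j) (hwsymm : ∀ i j, w i j = w j i)
    (hq : ∀ i k, 0 ≤ q i k)
    (s : V → Fin c) (hs : IsNash G coord α w q s) :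
    (∀ i j, G.Adj i j →
        w i j ≤ (1 + maxDisparity G α) *
          min (util G coord α w q s i) (util G coord α w q s j)) ∧
    (∀ (i : V) (k : Fin c), q i k ≤ util G coord α w q s i) :=
  stmt18_general G coord c hc α w q hα hw hwsymm hq s hs
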